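/- With notation as above, the symmetries ρ_0, ..., ρ_n generate Aut_W subject to the relations Σ_i m_{ij} ρ_i = 0 (written additively): more precisely, for any column j of E, the product Π_i ρ_i^{m_{ij}} is the identity matrix. -/
import Mathlib


open Complex

/-- The relations among the generators `ρ_j = [m^{0j},…,m^{nj}]` of `Aut_W` given by
the columns of `E`: for each column `j` of `E`, the product `Π_i ρ_i^{m_{ij}}` is the
identity diagonal matrix, i.e. each diagonal entry `e^{2πi Σ_i m^{li} m_{ij}}` is `1`. -/
theorem stmt_16 (n : ℕ) (m : Fin (n + 1) → Fin (n + 1) → ℕ)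
    (Einv : Matrix (Fin (n + 1)) (Fin (n + 1)) ℚ)
    (hE : (Matrix.of fun i j => (m i j : ℚ)) * Einv = 1)
    (hE' : Einv * (Matrix.of fun i j => (m i j : ℚ)) = 1) :
    ∀ j l : Fin (n + 1),
      ∏ i : Fin (n + 1),
        (Complex.exp (2 * Real.pi * I * ((Einv l i : ℚ) : ℂ))) ^ (m i j) = 1 := by
  intro j l
  have key : ∑ i : Fin (n + 1), (Einv l i) * (m i j : ℚ) = (1 : Matrix _ _ ℚ) l j := by
    rw [← hE']; rfl
  have key2 : (∑ i : Fin (n + 1), (Einv l i) * (m i j : ℚ) : ℚ) =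
      ((if l = j then 1 else 0 : ℤ) : ℚ) := by
    rw [key, Matrix.one_apply]
    split <;> simp
  calc ∏ i : Fin (n + 1),
        (Complex.exp (2 * Real.pi * I * ((Einv l i : ℚ) : ℂ))) ^ (m i j)
      = Complex.exp (∑ i : Fin (n + 1), (m i j : ℕ) * (2 * Real.pi * I * ((Einv l i : ℚ) : ℂ))) := by
        rw [Complex.exp_sum]
        exact Finset.prod_congr rfl fun i _ => by rw [← Complex.exp_nat_mul]
    _ = Complex.exp (((if l = j then 1 else 0 : ℤ) : ℂ) * (2 * Real.pi * I)) := by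
        congr 1
        have : (∑ i : Fin (n + 1), (m i j : ℕ) * (2 * Real.pi * I * ((Einv l i : ℚ) : ℂ)))
            = ((∑ i : Fin (n + 1), (Einv l i) * (m i j : ℚ) : ℚ) : ℂ) * (2 * Real.pi * I) := by
          push_cast
          rw [Finset.sum_mul]
          exact Finset.sum_congr rfl fun i _ => by ring
        rw [this, key2]; split <;> norm_num
    _ = 1 := by
        rw [Complex.exp_int_mul_two_pi_mul_I]
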